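/- For every real α > 0 and integers n ≥ 1 and 1 ≤ r ≤ n, define A ∈ R^{(n+1)×n} whose j-th column is e₁ + α e_{j+1} (where e_i ∈ R^{n+1} are the standard basis vectors). Then for every matrix C consisting of any r columns of A: ‖A − C C⁺ A‖_F² = α²(n − r)(1 + 1/(r + α²)), and since ‖A − A₁‖_F² = (n−1)α², it holds that ‖A − C C⁺ A‖_F² / ‖A − A₁‖_F² ≥ ((n−r)/(n−1)) · (1 + 1/(r + α²)). -/

import Mathlib

open Matrix MeasureTheory

noncomputable def frobSq {m n : Type*} [Fintype m] [Fintype n] (A : Matrix m n ℝ) : ℝ :=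
  ∑ i, ∑ j, A i j ^ 2

noncomputable def spec {m n : Type*} [Fintype m] [Fintype n] [DecidableEq n]
    (A : Matrix m n ℝ) : ℝ :=
  ‖LinearMap.toContinuousLinearMap (Matrix.toEuclideanLin A)‖

noncomputable def specErr {m n : Type*} [Fintype m] [Fintype n] [DecidableEq n]
    (A : Matrix m n ℝ) (k : ℕ) : ℝ :=
  sInf {e : ℝ | ∃ X : Matrix m n ℝ, X.rank ≤ k ∧ e = spec (A - X)}

noncomputable def frobSqErr {m n : Type*} [Fintype m] [Fintype n]
    (A : Matrix m n ℝ) (k : ℕ) : ℝ :=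
  sInf {e : ℝ | ∃ X : Matrix m n ℝ, X.rank ≤ k ∧ e = frobSq (A - X)}

noncomputable def specErrIn {m n r : Type*} [Fintype m] [Fintype n] [DecidableEq n]
    [Fintype r] (A : Matrix m n ℝ) (C : Matrix m r ℝ) (k : ℕ) : ℝ :=
  sInf {e : ℝ | ∃ X : Matrix m n ℝ, X.rank ≤ k ∧
    LinearMap.range X.mulVecLin ≤ LinearMap.range C.mulVecLin ∧ e = spec (A - X)}

noncomputable def frobSqErrIn {m n r : Type*} [Fintype m] [Fintype n] [Fintype r]
    (A : Matrix m n ℝ) (C : Matrix m r ℝ) (k : ℕ) : ℝ :=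
  sInf {e : ℝ | ∃ X : Matrix m n ℝ, X.rank ≤ k ∧
    LinearMap.range X.mulVecLin ≤ LinearMap.range C.mulVecLin ∧ e = frobSq (A - X)}

def IsMoorePenrose {m n : Type*} [Fintype m] [Fintype n]
    (M : Matrix m n ℝ) (P : Matrix n m ℝ) : Prop :=
  M * P * M = M ∧ P * M * P = P ∧ (M * P)ᵀ = M * P ∧ (P * M)ᵀ = P * M

/-- The `(n+1) × n` matrix whose `j`-th column is `e₁ + α e_{j+1}`. -/
noncomputable def lowerA (α : ℝ) (n : ℕ) : Matrix (Fin (n + 1)) (Fin n) ℝ :=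
  Matrix.of fun i j => (if (i : ℕ) = 0 then (1 : ℝ) else 0) +
    (if (i : ℕ) = (j : ℕ) + 1 then α else 0)

/-!
The Gram matrix of `A = lowerA α n` is `J + α² I`. Hence every non-selected column projects onto
the span of the `r` selected ones as `(r + α²)⁻¹` times their sum, leaving a residual of squared
norm `α² (1 + 1/(r + α²))`, while selected columns leave none. The top singular value of `A` is
`√(n + α²)`, attained at the all-ones vector, so by Eckart–Young
`‖A - A₁‖_F² = ‖A‖_F² - (n + α²) = (n - 1) α²`, and the ratio bound is then an identity.
-/

namespace Matrix

variable {m n r : Type*}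

lemma transpose_submatrix_mul_submatrix {R s : Type*} [Fintype m] [AddCommMonoid R] [Mul R]
    (A : Matrix m n R) (f : r → n) (g : s → n) :
    (A.submatrix id f)ᵀ * A.submatrix id g = (Aᵀ * A).submatrix f g := by
  rw [transpose_submatrix, submatrix_mul _ _ f id g Function.bijective_id]

lemma exists_eq_vecMulVec_of_rank_le_one [Fintype n] {X : Matrix m n ℝ} (h : X.rank ≤ 1) :
    ∃ u v, X = vecMulVec u v := by
  classical
  obtain ⟨u, hu⟩ := (Submodule.finrank_le_one_iff_isPrincipal _).mp h
  have hcol j : X.mulVecLin (Pi.single j 1) ∈ Submodule.span ℝ {u} :=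
    hu ▸ LinearMap.mem_range_self _ _
  choose v hv using fun j => Submodule.mem_span_singleton.mp (hcol j)
  refine ⟨u, v, ext fun i j => ?_⟩
  have hij := congrFun (hv j) i
  simp only [mulVecLin_apply, mulVec_single_one, Pi.smul_apply, smul_eq_mul] at hij
  rw [vecMulVec_apply, mul_comm, hij, col_apply]

end Matrix

lemma Function.Injective.sum_ite_exists_apply_eq {ι κ : Type*} [Fintype ι] [Fintype κ]
    {f : ι → κ} [DecidablePred fun j => ∃ i, f i = j] (hf : f.Injective) (a b : ℝ) :
    ∑ j, (if ∃ i, f i = j then a else b) =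
      Fintype.card ι * a + (Fintype.card κ - Fintype.card ι) * b := by
  have hrange : (Finset.univ.filter fun j => ∃ i, f i = j).card = Fintype.card ι := by
    classical
    rw [Finset.univ_filter_exists, Finset.card_image_of_injective _ hf, Finset.card_univ]
  have hsplit := Finset.card_filter_add_card_filter_not (s := Finset.univ)
    (fun j => ∃ i, f i = j)
  rw [hrange, Finset.card_univ] at hsplit
  rw [Finset.sum_ite, Finset.sum_const, Finset.sum_const, hrange, nsmul_eq_mul, nsmul_eq_mul,
    ← hsplit]
  push_cast
  ring

lemma IsMoorePenrose.mul_mul_eq_of_transpose_mul_eq_zero {m n r : Type*} [Fintype m]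
    [Fintype r] {C : Matrix m r ℝ} {P : Matrix r m ℝ} (hP : IsMoorePenrose C P)
    {A : Matrix m n ℝ} {Y : Matrix r n ℝ} (h : Cᵀ * (A - C * Y) = 0) : C * P * A = C * Y := by
  have hker : C * P * (A - C * Y) = 0 := by
    rw [← hP.2.2.1, transpose_mul, Matrix.mul_assoc, h, Matrix.mul_zero]
  rwa [Matrix.mul_sub, ← Matrix.mul_assoc, hP.1, sub_eq_zero] at hker

section Frobenius

variable {m n r : Type*} [Fintype m] [Fintype n]

lemma frobSq_eq_trace (M : Matrix m n ℝ) : frobSq M = (Mᵀ * M).trace := by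
  rw [frobSq, Finset.sum_comm]
  simp [trace, mul_apply, sq]

lemma frobSq_sub_vecMulVec (A : Matrix m n ℝ) (u : m → ℝ) (v : n → ℝ) :
    frobSq (A - vecMulVec u v) =
      frobSq A - 2 * (u ⬝ᵥ A *ᵥ v) + (∑ i, u i ^ 2) * ∑ j, v j ^ 2 := by
  simp only [frobSq, Matrix.sub_apply, vecMulVec_apply, sub_sq, Finset.sum_add_distrib,
    Finset.sum_sub_distrib, dotProduct, mulVec, Finset.mul_sum, Finset.sum_mul]
  congr 1
  · congr 1
    refine Finset.sum_congr rfl fun i _ => Finset.sum_congr rfl fun j _ => by ring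
  · simp_rw [mul_pow]
    exact Finset.sum_comm

/-- Eckart–Young for rank one, given a bound `c` on the squared spectral norm of `A`. -/
lemma frobSq_sub_le_frobSq_sub_vecMulVec (A : Matrix m n ℝ) {c : ℝ} (hc : 0 ≤ c)
    (hA : ∀ u : m → ℝ, ∑ j, (u ᵥ* A) j ^ 2 ≤ c * ∑ i, u i ^ 2) (u : m → ℝ) (v : n → ℝ) :
    frobSq A - c ≤ frobSq (A - vecMulVec u v) := by
  rw [frobSq_sub_vecMulVec, dotProduct_mulVec]
  set t := (∑ i, u i ^ 2) * ∑ j, v j ^ 2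
  have ht : 0 ≤ t := by positivity
  have hD : (u ᵥ* A ⬝ᵥ v) ^ 2 ≤ c * t := by
    calc (u ᵥ* A ⬝ᵥ v) ^ 2 ≤ (∑ j, (u ᵥ* A) j ^ 2) * ∑ j, v j ^ 2 :=
          Finset.sum_mul_sq_le_sq_mul_sq _ _ _
      _ ≤ (c * ∑ i, u i ^ 2) * ∑ j, v j ^ 2 := by gcongr; exact hA u
      _ = c * t := by ring
  nlinarith [sq_nonneg (t - c), sq_nonneg (t + c - 2 * (u ᵥ* A ⬝ᵥ v))]

lemma frobSqErr_one_eq_of_forall_le {A : Matrix m n ℝ} {e : ℝ}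
    (hle : ∀ u v, e ≤ frobSq (A - vecMulVec u v)) (u₀ : m → ℝ) (v₀ : n → ℝ)
    (heq : frobSq (A - vecMulVec u₀ v₀) = e) : frobSqErr A 1 = e := by
  have hmem : e ∈ {e : ℝ | ∃ X : Matrix m n ℝ, X.rank ≤ 1 ∧ e = frobSq (A - X)} :=
    ⟨_, rank_vecMulVec_le u₀ v₀, heq.symm⟩
  refine le_antisymm (csInf_le ⟨e, ?_⟩ hmem) (le_csInf ⟨e, hmem⟩ ?_) <;>
  · rintro _ ⟨X, hX, rfl⟩
    obtain ⟨u, v, rfl⟩ := exists_eq_vecMulVec_of_rank_le_one hX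
    exact hle u v

variable [Fintype r] {C : Matrix m r ℝ} {P : Matrix r m ℝ}

lemma IsMoorePenrose.frobSq_sub_mul_mul (hP : IsMoorePenrose C P) (A : Matrix m n ℝ) :
    frobSq (A - C * P * A) = frobSq A - (Aᵀ * (C * P * A)).trace := by
  have hidem : C * P * (C * P) = C * P := by rw [← Matrix.mul_assoc, hP.1]
  have horth : (C * P * A)ᵀ * (A - C * P * A) = 0 := by
    rw [transpose_mul, hP.2.2.1, Matrix.mul_sub, Matrix.mul_assoc Aᵀ (C * P) (C * P * A),
      ← Matrix.mul_assoc (C * P) (C * P), hidem, Matrix.mul_assoc, sub_self]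
  rw [frobSq_eq_trace, frobSq_eq_trace, transpose_sub, Matrix.sub_mul, horth, sub_zero,
    Matrix.mul_sub, trace_sub]

end Frobenius

section lowerA

variable (α : ℝ) (n : ℕ)

lemma lowerA_transpose_mul_self :
    (lowerA α n)ᵀ * lowerA α n = of fun i j => 1 + if i = j then α ^ 2 else 0 := by
  ext i j
  simp [mul_apply, Fin.sum_univ_succ, lowerA, Fin.val_inj, add_mul, mul_add, ite_mul,
    Finset.sum_add_distrib, sq, eq_comm]

lemma frobSq_lowerA : frobSq (lowerA α n) = n * (1 + α ^ 2) := by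
  simp [frobSq_eq_trace, lowerA_transpose_mul_self, trace, mul_add]

lemma vecMul_lowerA (u : Fin (n + 1) → ℝ) (j : Fin n) :
    (u ᵥ* lowerA α n) j = u 0 + α * u j.succ := by
  simp [vecMul, dotProduct, Fin.sum_univ_succ, lowerA, Fin.val_inj, mul_add, mul_comm]

lemma sum_vecMul_lowerA_sq_le (u : Fin (n + 1) → ℝ) :
    ∑ j, (u ᵥ* lowerA α n) j ^ 2 ≤ (n + α ^ 2) * ∑ i, u i ^ 2 := by
  have hCS : (∑ j : Fin n, u j.succ) ^ 2 ≤ n * ∑ j : Fin n, u j.succ ^ 2 := by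
    simpa using Finset.sum_mul_sq_le_sq_mul_sq Finset.univ (fun _ => (1 : ℝ))
      (fun j : Fin n => u j.succ)
  have hexpand : ∑ j, (u ᵥ* lowerA α n) j ^ 2 =
      n * u 0 ^ 2 + 2 * α * u 0 * ∑ j : Fin n, u j.succ + α ^ 2 * ∑ j : Fin n, u j.succ ^ 2 := by
    have hsq (j : Fin n) : (u 0 + α * u j.succ) ^ 2 =
        u 0 ^ 2 + 2 * α * u 0 * u j.succ + α ^ 2 * u j.succ ^ 2 := by ring
    simp [vecMul_lowerA, hsq, Finset.sum_add_distrib, ← Finset.mul_sum]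
  rw [hexpand, Fin.sum_univ_succ]
  nlinarith [sq_nonneg (α * u 0 - ∑ j : Fin n, u j.succ)]

/-- The witness is `A 𝟙 / n` times `𝟙ᵀ`, where `𝟙` is the top right singular vector of `A`. -/
lemma frobSq_lowerA_sub_vecMulVec_cons (hn : n ≠ 0) :
    frobSq (lowerA α n - vecMulVec (Fin.cons 1 fun _ => α / n) 1) = (n - 1) * α ^ 2 := by
  rw [frobSq_sub_vecMulVec, frobSq_lowerA, dotProduct_mulVec]
  simp [Fin.sum_univ_succ, dotProduct, vecMul_lowerA, div_pow]
  field_simp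
  ring

lemma frobSqErr_lowerA_one (hn : n ≠ 0) : frobSqErr (lowerA α n) 1 = (n - 1) * α ^ 2 := by
  refine frobSqErr_one_eq_of_forall_le (fun u v => ?_) _ _
    (frobSq_lowerA_sub_vecMulVec_cons α n hn)
  have := frobSq_sub_le_frobSq_sub_vecMulVec _ (by positivity) (sum_vecMul_lowerA_sq_le α n) u v
  rw [frobSq_lowerA] at this
  linarith

end lowerA

/-- Coefficients of the projections of the columns of `lowerA α n` onto the span of the columns
selected by `f`: a selected column projects to itself, every other one to `(r + α²)⁻¹` times the
sum of the selected columns. -/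
noncomputable def lowerAProjCoeff (α : ℝ) {n r : ℕ} (f : Fin r → Fin n) :
    Matrix (Fin r) (Fin n) ℝ :=
  of fun k j => if ∃ l, f l = j then (if f k = j then 1 else 0) else 1 / (r + α ^ 2)

section lowerAProjCoeff

variable {α : ℝ} {n r : ℕ} {f : Fin r → Fin n}

lemma transpose_mul_sub_mul_lowerAProjCoeff (hα : α ≠ 0) (hf : f.Injective) :
    ((lowerA α n).submatrix id f)ᵀ *
      (lowerA α n - (lowerA α n).submatrix id f * lowerAProjCoeff α f) = 0 := by
  have hCA := (lowerA α n).transpose_submatrix_mul_submatrix f id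
  rw [submatrix_id_id] at hCA
  rw [Matrix.mul_sub, ← Matrix.mul_assoc, hCA, transpose_submatrix_mul_submatrix,
    lowerA_transpose_mul_self, sub_eq_zero]
  ext k j
  by_cases hj : ∃ l, f l = j
  · obtain ⟨l, rfl⟩ := hj
    simp [mul_apply, lowerAProjCoeff, hf.eq_iff]
  · have hβ : (r : ℝ) + α ^ 2 ≠ 0 := by positivity
    have hkj : f k ≠ j := fun h => hj ⟨k, h⟩
    simp [mul_apply, lowerAProjCoeff, hj, hkj, hf.eq_iff, Finset.sum_add_distrib, add_mul]
    field_simp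

lemma trace_transpose_lowerA_mul_mul_lowerAProjCoeff (hf : f.Injective) :
    ((lowerA α n)ᵀ * ((lowerA α n).submatrix id f * lowerAProjCoeff α f)).trace =
      r * (1 + α ^ 2) + (n - r) * (r / (r + α ^ 2)) := by
  have hAC := (lowerA α n).transpose_submatrix_mul_submatrix id f
  rw [submatrix_id_id] at hAC
  have hdiag (j : Fin n) :
      ((lowerA α n)ᵀ * (lowerA α n).submatrix id f * lowerAProjCoeff α f) j j =
        if ∃ l, f l = j then 1 + α ^ 2 else r / (r + α ^ 2) := by
    rw [hAC, lowerA_transpose_mul_self]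
    by_cases hj : ∃ l, f l = j
    · obtain ⟨l, rfl⟩ := hj
      simp [mul_apply, lowerAProjCoeff, hf.eq_iff]
    · have hjk (k : Fin r) : j ≠ f k := fun h => hj ⟨k, h.symm⟩
      simp [mul_apply, lowerAProjCoeff, hj, hjk, div_eq_mul_inv]
  simp only [← Matrix.mul_assoc, trace, diag_apply, hdiag]
  rw [hf.sum_ite_exists_apply_eq, Fintype.card_fin, Fintype.card_fin]

lemma frobSq_lowerA_sub_mul_mul {P : Matrix (Fin r) (Fin (n + 1)) ℝ} (hα : α ≠ 0)
    (hf : f.Injective) (hP : IsMoorePenrose ((lowerA α n).submatrix id f) P) :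
    frobSq (lowerA α n - (lowerA α n).submatrix id f * P * lowerA α n) =
      α ^ 2 * ((n : ℝ) - (r : ℝ)) * (1 + 1 / ((r : ℝ) + α ^ 2)) := by
  have hβ : (r : ℝ) + α ^ 2 ≠ 0 := by positivity
  rw [hP.frobSq_sub_mul_mul, hP.mul_mul_eq_of_transpose_mul_eq_zero
    (transpose_mul_sub_mul_lowerAProjCoeff hα hf),
    trace_transpose_lowerA_mul_mul_lowerAProjCoeff hf, frobSq_lowerA]
  field_simp
  ring

end lowerAProjCoeff

theorem frobenius_norm_lower_bound_rank_one_general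
    (α : ℝ) (hα : 0 < α) (n : ℕ) (hn : 1 ≤ n) (r : ℕ)
    (f : Fin r → Fin n) (hf : Function.Injective f)
    (C : Matrix (Fin (n + 1)) (Fin r) ℝ) (hC : C = (lowerA α n).submatrix id f)
    (P : Matrix (Fin r) (Fin (n + 1)) ℝ) (hP : IsMoorePenrose C P) :
    frobSq (lowerA α n - C * P * lowerA α n) =
      α ^ 2 * ((n : ℝ) - (r : ℝ)) * (1 + 1 / ((r : ℝ) + α ^ 2)) ∧
    frobSqErr (lowerA α n) 1 = ((n : ℝ) - 1) * α ^ 2 ∧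
    (((n : ℝ) - (r : ℝ)) / ((n : ℝ) - 1)) * (1 + 1 / ((r : ℝ) + α ^ 2)) ≤
      frobSq (lowerA α n - C * P * lowerA α n) / frobSqErr (lowerA α n) 1 := by
  subst hC
  have hres := frobSq_lowerA_sub_mul_mul hα.ne' hf hP
  have herr := frobSqErr_lowerA_one α n (by omega)
  refine ⟨hres, herr, le_of_eq ?_⟩
  rw [hres, herr, mul_comm _ (α ^ 2), mul_assoc, mul_div_mul_left _ _ (pow_ne_zero 2 hα.ne'),
    div_mul_eq_mul_div]

/-- **Frobenius norm lower bound, rank-one case** (Lemma 9.2 of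
Boutsidis–Drineas–Magdon-Ismail): for the matrix `A` with columns `e₁ + α e_{j+1}` and
any matrix `C` made of `r` of its columns,
`‖A - C C⁺ A‖_F² = α² (n - r)(1 + 1/(r + α²))`, `‖A - A₁‖_F² = (n - 1) α²`, hence
`‖A - C C⁺ A‖_F² / ‖A - A₁‖_F² ≥ ((n - r)/(n - 1)) (1 + 1/(r + α²))`. -/
theorem frobenius_norm_lower_bound_rank_one
    (α : ℝ) (hα : 0 < α) (n : ℕ) (hn : 1 ≤ n) (r : ℕ) (hr1 : 1 ≤ r) (hrn : r ≤ n)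
    (f : Fin r → Fin n) (hf : Function.Injective f)
    (C : Matrix (Fin (n + 1)) (Fin r) ℝ) (hC : C = (lowerA α n).submatrix id f)
    (P : Matrix (Fin r) (Fin (n + 1)) ℝ) (hP : IsMoorePenrose C P) :
    frobSq (lowerA α n - C * P * lowerA α n) =
      α ^ 2 * ((n : ℝ) - (r : ℝ)) * (1 + 1 / ((r : ℝ) + α ^ 2)) ∧
    frobSqErr (lowerA α n) 1 = ((n : ℝ) - 1) * α ^ 2 ∧
    (((n : ℝ) - (r : ℝ)) / ((n : ℝ) - 1)) * (1 + 1 / ((r : ℝ) + α ^ 2)) ≤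
      frobSq (lowerA α n - C * P * lowerA α n) / frobSqErr (lowerA α n) 1 :=
  frobenius_norm_lower_bound_rank_one_general α hα n hn r f hf C hC P hP
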